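/- Let G be a graph obtained from a bipartite graph with parts S and T by adding a matching M of size ℓ (each matching edge joining two vertices in the same part). If k ≥ 4 and ℓ < k(k-1)/2, then every two proper k-colorings of G are Kempe equivalent. -/

import Mathlib

open SimpleGraph

variable {V : Type*}

/-- `c` is a proper `k`-coloring of the simple graph `G`. -/
def IsProperColoring (G : SimpleGraph V) (k : ℕ) (c : V → Fin k) : Prop :=
  ∀ ⦃u v : V⦄, G.Adj u v → c u ≠ c v

/-- The subgraph of `G` spanned by the vertices colored `i` or `j` (all other
vertices are isolated in this graph). -/
def twoColorSub (G : SimpleGraph V) {k : ℕ} (c : V → Fin k) (i j : Fin k) :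
    SimpleGraph V where
  Adj u v := G.Adj u v ∧ (c u = i ∨ c u = j) ∧ (c v = i ∨ c v = j)
  symm := ⟨fun _ _ h => ⟨h.1.symm, h.2.2, h.2.1⟩⟩
  loopless := ⟨fun v h => G.loopless.irrefl v h.1⟩

/-- A single Kempe change: swap the colors `i` and `j` on the connected component
of the `(i,j)`-colored subgraph containing the vertex `v₀`. -/
def KempeStep (G : SimpleGraph V) {k : ℕ} (c c' : V → Fin k) : Prop :=
  ∃ i j : Fin k, i ≠ j ∧ ∃ v₀ : V,
    (∀ v : V, (twoColorSub G c i j).Reachable v₀ v →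
      (c v = i → c' v = j) ∧ (c v = j → c' v = i) ∧ (c v ≠ i → c v ≠ j → c' v = c v)) ∧
    (∀ v : V, ¬ (twoColorSub G c i j).Reachable v₀ v → c' v = c v)

/-- Two colorings are Kempe equivalent if one is obtained from the other by a
finite sequence of Kempe changes. -/
def KempeEquiv (G : SimpleGraph V) {k : ℕ} (c c' : V → Fin k) : Prop :=
  Relation.ReflTransGen (fun a b : V → Fin k => KempeStep G a b) c c'

/-- `G` is obtained from a bipartite graph with parts `S` and `Sᶜ` by adding the
edges of `H`, each of which joins two vertices in the same part. -/
def IsBPlusE (G : SimpleGraph V) (S : Set V) (H : SimpleGraph V) : Prop :=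
  H ≤ G ∧
  (∀ u v : V, G.Adj u v → ¬ H.Adj u v → (u ∈ S ↔ v ∉ S)) ∧
  (∀ u v : V, H.Adj u v → (u ∈ S ↔ v ∈ S))

/-!
Since `H` has fewer than `k(k-1)/2` edges, some pair of colours `α, β` occurs on no edge of `H`.
Every edge of an `(α, β)`-Kempe chain then crosses between the parts, so swapping the chains in
which `α` sits on the wrong side confines `α` to `S` and `β` to `Sᶜ`. Greedy single-vertex
recolourings next make every vertex of `S` coloured `α` or matched to an `α`-vertex, and every
vertex of `Sᶜ` coloured `β` or matched to a `β`-vertex. As `k ≥ 4` there are two further colours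
`σ, τ`; they form a free pair as well, so after polarizing them every remaining vertex of `S` can
be recoloured `σ` and every remaining vertex of `Sᶜ` can be recoloured `τ`.

In this normal form a colouring is determined by the orientation of the matching edges carrying
`α, σ` or `β, τ`, and two normal forms differ by flipping edges whose two ends form a Kempe chain.
Normal forms with different colour roles are related by a permutation of the colours, and a
global permutation is a product of transpositions, each of which swaps all Kempe chains of a pair.
-/

section Kempe

variable {k : ℕ} {G : SimpleGraph V} {c d : V → Fin k} {a b : Fin k} {X Y : Set V} {u v v₀ : V}

open Classical in
noncomputable def swapOn (c : V → Fin k) (a b : Fin k) (X : Set V) : V → Fin k :=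
  fun v => if v ∈ X then Equiv.swap a b (c v) else c v

def kempeChain (G : SimpleGraph V) (c : V → Fin k) (a b : Fin k) (v₀ : V) : Set V :=
  {v | (twoColorSub G c a b).Reachable v₀ v}

def IsKempeClosed (G : SimpleGraph V) (c : V → Fin k) (a b : Fin k) (X : Set V) : Prop :=
  ∀ ⦃u v⦄, (twoColorSub G c a b).Adj u v → u ∈ X → v ∈ X

theorem swapOn_of_mem (h : v ∈ X) : swapOn c a b X v = Equiv.swap a b (c v) := if_pos h

theorem swapOn_of_notMem (h : v ∉ X) : swapOn c a b X v = c v := if_neg h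

theorem swapOn_of_ne (ha : c v ≠ a) (hb : c v ≠ b) : swapOn c a b X v = c v := by
  by_cases h : v ∈ X
  · rw [swapOn_of_mem h, Equiv.swap_apply_of_ne_of_ne ha hb]
  · exact swapOn_of_notMem h

theorem swapOn_swapOn_self : swapOn (swapOn c a b X) a b X = c := by
  funext v
  by_cases h : v ∈ X
  · rw [swapOn_of_mem h, swapOn_of_mem h, Equiv.swap_apply_self]
  · rw [swapOn_of_notMem h, swapOn_of_notMem h]

theorem swapOn_swapOn (h : Disjoint X Y) :
    swapOn (swapOn c a b X) a b Y = swapOn c a b (X ∪ Y) := by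
  funext v
  by_cases hX : v ∈ X
  · rw [swapOn_of_notMem (h.notMem_of_mem_left hX), swapOn_of_mem hX,
      swapOn_of_mem (Set.mem_union_left Y hX)]
  · by_cases hY : v ∈ Y
    · rw [swapOn_of_mem hY, swapOn_of_notMem hX, swapOn_of_mem (Set.mem_union_right X hY)]
    · rw [swapOn_of_notMem hY, swapOn_of_notMem hX,
        swapOn_of_notMem (by simp [hX, hY])]

theorem Equiv.swap_apply_eq_or_eq_iff {α : Type*} [DecidableEq α] {a b z : α} :
    (Equiv.swap a b z = a ∨ Equiv.swap a b z = b) ↔ (z = a ∨ z = b) := by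
  rw [Equiv.swap_apply_eq_iff, Equiv.swap_apply_eq_iff, Equiv.swap_apply_left,
    Equiv.swap_apply_right, or_comm]

theorem twoColorSub_swapOn : twoColorSub G (swapOn c a b X) a b = twoColorSub G c a b := by
  have hcol : ∀ v, (swapOn c a b X v = a ∨ swapOn c a b X v = b) ↔ (c v = a ∨ c v = b) := by
    intro v
    by_cases h : v ∈ X
    · rw [swapOn_of_mem h, Equiv.swap_apply_eq_or_eq_iff]
    · rw [swapOn_of_notMem h]
  ext u v
  exact and_congr Iff.rfl (and_congr (hcol u) (hcol v))

theorem kempeChain_swapOn : kempeChain G (swapOn c a b X) a b v₀ = kempeChain G c a b v₀ := by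
  rw [kempeChain, kempeChain, twoColorSub_swapOn]

theorem kempeStep_iff :
    KempeStep G c d ↔ ∃ a b, a ≠ b ∧ ∃ v₀, d = swapOn c a b (kempeChain G c a b v₀) := by
  constructor
  · rintro ⟨a, b, hab, v₀, hin, hout⟩
    refine ⟨a, b, hab, v₀, funext fun v => ?_⟩
    by_cases hv : v ∈ kempeChain G c a b v₀
    · obtain ⟨ha, hb, hne⟩ := hin v hv
      rw [swapOn_of_mem hv, Equiv.swap_apply_def]
      split_ifs with h₁ h₂
      exacts [ha h₁, hb h₂, hne h₁ h₂]
    · rw [swapOn_of_notMem hv, hout v hv]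
  · rintro ⟨a, b, hab, v₀, rfl⟩
    refine ⟨a, b, hab, v₀, fun v hv => ?_, fun v hv => swapOn_of_notMem hv⟩
    rw [swapOn_of_mem (X := kempeChain G c a b v₀) hv]
    exact ⟨fun h => h ▸ Equiv.swap_apply_left a b, fun h => h ▸ Equiv.swap_apply_right a b,
      Equiv.swap_apply_of_ne_of_ne⟩

theorem KempeStep.symm (h : KempeStep G c d) : KempeStep G d c := by
  obtain ⟨a, b, hab, v₀, rfl⟩ := kempeStep_iff.1 h
  exact kempeStep_iff.2 ⟨a, b, hab, v₀, by rw [kempeChain_swapOn, swapOn_swapOn_self]⟩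

theorem KempeStep.kempeEquiv (h : KempeStep G c d) : KempeEquiv G c d :=
  Relation.ReflTransGen.single h

theorem KempeEquiv.refl (c : V → Fin k) : KempeEquiv G c c :=
  Relation.ReflTransGen.refl

theorem KempeEquiv.trans {e : V → Fin k} (h : KempeEquiv G c d) (h' : KempeEquiv G d e) :
    KempeEquiv G c e :=
  Relation.ReflTransGen.trans h h'

theorem KempeEquiv.symm (h : KempeEquiv G c d) : KempeEquiv G d c := by
  induction h with
  | refl => exact .refl c
  | tail _ hstep ih => exact Relation.ReflTransGen.head hstep.symm ih

theorem IsKempeClosed.mem_of_reachable (hX : IsKempeClosed G c a b X) (hu : u ∈ X)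
    (h : (twoColorSub G c a b).Reachable u v) : v ∈ X := by
  rw [reachable_iff_reflTransGen] at h
  induction h with
  | refl => exact hu
  | tail _ hadj ih => exact hX hadj ih

theorem kempeEquiv_swapOn [Finite V] (hab : a ≠ b) (hX : IsKempeClosed G c a b X) :
    KempeEquiv G c (swapOn c a b X) := by
  induction hn : (X ∩ {v | c v = a ∨ c v = b}).ncard using Nat.strong_induction_on
    generalizing X with
  | _ n ih =>
  by_cases hX₀ : ∃ v₀ ∈ X, c v₀ = a ∨ c v₀ = b
  · obtain ⟨v₀, hv₀X, hv₀⟩ := hX₀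
    set R := kempeChain G c a b v₀
    have hRX : R ⊆ X := fun v hv => hX.mem_of_reachable hv₀X hv
    have hZ : IsKempeClosed G c a b (X \ R) := fun u v huv hu =>
      ⟨hX huv hu.1, fun hv => hu.2 (hv.trans huv.symm.reachable)⟩
    have hlt : ((X \ R) ∩ {v | c v = a ∨ c v = b}).ncard < n := by
      have hsub : (X \ R) ∩ {v | c v = a ∨ c v = b} ⊆ X ∩ {v | c v = a ∨ c v = b} :=
        fun v hv => ⟨hv.1.1, hv.2⟩
      refine hn ▸ Set.ncard_lt_ncard ((Set.ssubset_iff_of_subset hsub).2 ?_) (Set.toFinite _)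
      exact ⟨v₀, ⟨hv₀X, hv₀⟩, fun h => h.1.2 (Reachable.refl v₀)⟩
    have hstep : KempeStep G (swapOn c a b (X \ R)) (swapOn c a b X) := by
      refine kempeStep_iff.2 ⟨a, b, hab, v₀, ?_⟩
      rw [kempeChain_swapOn, swapOn_swapOn Set.disjoint_sdiff_left, Set.sdiff_union_of_subset hRX]
    exact (ih _ hlt hZ rfl).trans hstep.kempeEquiv
  · push Not at hX₀
    have hfix : swapOn c a b X = c := funext fun v => by
      by_cases hv : v ∈ X
      · exact swapOn_of_ne (hX₀ v hv).1 (hX₀ v hv).2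
      · exact swapOn_of_notMem hv
    rw [hfix]
    exact .refl c

theorem IsProperColoring.swapOn (hc : IsProperColoring G k c) (hX : IsKempeClosed G c a b X) :
    IsProperColoring G k (swapOn c a b X) := by
  have hmixed : ∀ ⦃u v⦄, G.Adj u v → u ∈ X → v ∉ X → Equiv.swap a b (c u) ≠ c v := by
    intro u v huv hu hv h
    have hcol : ¬((c u = a ∨ c u = b) ∧ (c v = a ∨ c v = b)) := fun h' =>
      hv (hX ⟨huv, h'⟩ hu)
    have := hc huv
    rw [Equiv.swap_apply_def] at h
    split_ifs at h <;> simp_all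
  intro u v huv
  by_cases hu : u ∈ X <;> by_cases hv : v ∈ X
  · rw [swapOn_of_mem hu, swapOn_of_mem hv]
    exact (Equiv.swap a b).injective.ne (hc huv)
  · rw [swapOn_of_mem hu, swapOn_of_notMem hv]
    exact hmixed huv hu hv
  · rw [swapOn_of_notMem hu, swapOn_of_mem hv]
    exact (hmixed huv.symm hv hu).symm
  · rw [swapOn_of_notMem hu, swapOn_of_notMem hv]
    exact hc huv

theorem kempeEquiv_perm_comp [Finite V] (π : Equiv.Perm (Fin k)) : KempeEquiv G c (π ∘ c) := by
  induction π using Equiv.Perm.swap_induction_on with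
  | one => exact .refl c
  | swap_mul π a b hab ih =>
    have h : ⇑(Equiv.swap a b * π) ∘ c = swapOn (π ∘ c) a b Set.univ :=
      funext fun v => (swapOn_of_mem (c := π ∘ c) (Set.mem_univ v)).symm
    exact h ▸ ih.trans (kempeEquiv_swapOn hab fun _ _ _ _ => Set.mem_univ _)

end Kempe

section Recolor

variable {k : ℕ} {G : SimpleGraph V} {c : V → Fin k} {a b x : Fin k} {v : V}

theorem kempeChain_eq_singleton (h : ∀ w, G.Adj v w → c w ≠ a ∧ c w ≠ b) :
    kempeChain G c a b v = {v} := by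
  ext w
  refine ⟨fun hw => ?_, fun hw => hw ▸ Reachable.refl v⟩
  rw [kempeChain, Set.mem_ofPred_eq, reachable_iff_reflTransGen] at hw
  rcases hw.cases_head with rfl | ⟨u, hvu, -⟩
  · rfl
  · rcases hvu.2.2 with hu | hu
    exacts [absurd hu (h u hvu.1).1, absurd hu (h u hvu.1).2]

theorem kempeStep_update [DecidableEq V] (hc : IsProperColoring G k c) (hv : c v ≠ x)
    (hx : ∀ w, G.Adj v w → c w ≠ x) : KempeStep G c (Function.update c v x) := by
  refine kempeStep_iff.2 ⟨c v, x, hv, v, ?_⟩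
  rw [kempeChain_eq_singleton fun w hw => ⟨(hc hw).symm, hx w hw⟩]
  funext w
  by_cases hw : w = v
  · subst hw
    rw [Function.update_self, swapOn_of_mem (Set.mem_singleton w), Equiv.swap_apply_left]
  · rw [Function.update_of_ne hw, swapOn_of_notMem (Set.notMem_singleton_iff.2 hw)]

theorem IsProperColoring.update [DecidableEq V] (hc : IsProperColoring G k c)
    (hx : ∀ w, G.Adj v w → c w ≠ x) : IsProperColoring G k (Function.update c v x) := by
  intro u w huw
  by_cases hu : u = v <;> by_cases hw : w = v
  · exact absurd (hu.trans hw.symm) (G.ne_of_adj huw)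
  · subst hu
    rw [Function.update_self, Function.update_of_ne hw]
    exact (hx w huw).symm
  · subst hw
    rw [Function.update_self, Function.update_of_ne hu]
    exact hx u huw.symm
  · rw [Function.update_of_ne hu, Function.update_of_ne hw]
    exact hc huw

theorem exists_kempeEquiv_recolor_maximal [Finite V] (hc : IsProperColoring G k c)
    (P : Set V) (x : Fin k) :
    ∃ d, KempeEquiv G c d ∧ IsProperColoring G k d ∧ (∀ v ∉ P, d v = c v) ∧
      (∀ v ∈ P, d v = x ∨ d v = c v) ∧ ∀ v ∈ P, d v ≠ x → ∃ w, G.Adj v w ∧ d w = x := by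
  classical
  let 𝒟 : Set (V → Fin k) := {d | KempeEquiv G c d ∧ IsProperColoring G k d ∧
    (∀ v ∉ P, d v = c v) ∧ ∀ v ∈ P, d v = x ∨ d v = c v}
  obtain ⟨d, ⟨hcd, hd, hout, hin⟩, hmax⟩ := Set.exists_max_image 𝒟 (fun d => {v | d v = x}.ncard)
    (Set.toFinite 𝒟) ⟨c, .refl c, hc, fun _ _ => rfl, fun _ _ => Or.inr rfl⟩
  refine ⟨d, hcd, hd, hout, hin, fun v₀ hv₀ hdv₀ => ?_⟩
  by_contra! hfree
  have hnew : Function.update d v₀ x ∈ 𝒟 := by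
    refine ⟨hcd.trans (kempeStep_update hd hdv₀ hfree).kempeEquiv, hd.update hfree,
      fun v hv => ?_, fun v hv => ?_⟩
    · rw [Function.update_of_ne (ne_of_mem_of_not_mem hv₀ hv).symm]
      exact hout v hv
    · by_cases h : v = v₀
      · subst h
        exact Or.inl (Function.update_self v x d)
      · rw [Function.update_of_ne h]
        exact hin v hv
  have hgrow : {v | d v = x} ⊂ {v | Function.update d v₀ x v = x} := by
    refine (Set.ssubset_iff_of_subset fun v hv => ?_).2
      ⟨v₀, Function.update_self (β := fun _ => Fin k) v₀ x d, hdv₀⟩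
    by_cases h : v = v₀
    · subst h
      exact Function.update_self (β := fun _ => Fin k) v x d
    · exact (Function.update_of_ne h x d).trans hv
  exact (hmax _ hnew).not_gt (Set.ncard_lt_ncard hgrow (Set.toFinite _))

theorem exists_kempeEquiv_recolor_indepSet [Finite V] (hc : IsProperColoring G k c)
    {Q : Set V} (hQ : G.IsIndepSet Q) (x : Fin k) (hx : ∀ ⦃v w⦄, v ∈ Q → G.Adj v w → c w ≠ x) :
    ∃ d, KempeEquiv G c d ∧ IsProperColoring G k d ∧ (∀ v ∈ Q, d v = x) ∧ ∀ v ∉ Q, d v = c v := by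
  obtain ⟨d, hcd, hd, hout, -, hmax⟩ :=
    exists_kempeEquiv_recolor_maximal hc Q x
  refine ⟨d, hcd, hd, fun v hv => ?_, hout⟩
  by_contra hdv
  obtain ⟨w, hvw, hw⟩ := hmax v hv hdv
  have hwQ : w ∉ Q := fun hwQ => hQ hv hwQ (G.ne_of_adj hvw) hvw
  exact hx hv hvw (hout w hwQ ▸ hw)

end Recolor

section BPlusM

variable {k : ℕ} {G H : SimpleGraph V} {S P : Set V} {c : V → Fin k} {a b x : Fin k} {u v : V}

def IsPart (G H : SimpleGraph V) (P : Set V) : Prop :=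
  ∀ ⦃u v⦄, u ∈ P → G.Adj u v → (v ∈ P ↔ H.Adj u v)

def IsFreePair (H : SimpleGraph V) (c : V → Fin k) (a b : Fin k) : Prop :=
  ∀ ⦃u v⦄, H.Adj u v → ¬(c u = a ∧ c v = b)

def IsAnchoredOn (H : SimpleGraph V) (P : Set V) (c : V → Fin k) (a : Fin k) : Prop :=
  ∀ v ∈ P, c v = a ∨ ∃ u, H.Adj v u ∧ c u = a

def IsPairedOn (H : SimpleGraph V) (P : Set V) (c : V → Fin k) (a x : Fin k) : Prop :=
  IsAnchoredOn H P c a ∧ ∀ v ∈ P, c v = a ∨ c v = x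

def IsNormalForm (S : Set V) (H : SimpleGraph V) (c : V → Fin k) (r : Fin 4 ↪ Fin k) : Prop :=
  IsPairedOn H S c (r 0) (r 1) ∧ IsPairedOn H Sᶜ c (r 2) (r 3)

theorem IsBPlusE.compl (h : IsBPlusE G S H) : IsBPlusE G Sᶜ H := by
  refine ⟨h.1, fun u v huv hH => ?_, fun u v huv => not_congr (h.2.2 u v huv)⟩
  simp only [Set.mem_compl_iff, h.2.1 u v huv hH, not_not]

theorem IsBPlusE.isPart (h : IsBPlusE G S H) : IsPart G H S := by
  refine fun u v hu huv => ⟨fun hv => ?_, fun hH => (h.2.2 u v hH).1 hu⟩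
  by_contra hH
  exact (h.2.1 u v huv hH).1 hu hv

theorem IsPart.mem_of_adj (hP : IsPart G H P) (hHG : H ≤ G) (hu : u ∈ P) (huv : H.Adj u v) :
    v ∈ P :=
  (hP hu (hHG huv)).2 huv

theorem IsAnchoredOn.mono {d : V → Fin k} (h : IsAnchoredOn H P c a) (hHG : H ≤ G)
    (hP : IsPart G H P) (hd : ∀ v ∈ P, c v = a → d v = a) : IsAnchoredOn H P d a := by
  refine fun v hv => or_iff_not_imp_left.2 fun hdv => ?_
  obtain ⟨u, hvu, hu⟩ := (h v hv).resolve_left fun hcv => hdv (hd v hv hcv)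
  exact ⟨u, hvu, hd u (hP.mem_of_adj hHG hv hvu) hu⟩

theorem IsPairedOn.congr {d : V → Fin k} (h : IsPairedOn H P c a x) (hHG : H ≤ G)
    (hP : IsPart G H P) (hd : ∀ v ∈ P, d v = c v) : IsPairedOn H P d a x :=
  ⟨h.1.mono hHG hP fun v hv hcv => (hd v hv).trans hcv, fun v hv => hd v hv ▸ h.2 v hv⟩

theorem IsPairedOn.perm_comp (h : IsPairedOn H P c a x) (π : Equiv.Perm (Fin k)) :
    IsPairedOn H P (π ∘ c) (π a) (π x) := by
  refine ⟨fun v hv => ?_, fun v hv => ?_⟩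
  · rcases h.1 v hv with hcv | ⟨u, hvu, hu⟩
    exacts [Or.inl (congrArg π hcv), Or.inr ⟨u, hvu, congrArg π hu⟩]
  · rcases h.2 v hv with hcv | hcv
    exacts [Or.inl (congrArg π hcv), Or.inr (congrArg π hcv)]

theorem IsNormalForm.perm_comp {r : Fin 4 ↪ Fin k} (h : IsNormalForm S H c r)
    (π : Equiv.Perm (Fin k)) : IsNormalForm S H (π ∘ c) (r.trans π.toEmbedding) :=
  ⟨h.1.perm_comp π, h.2.perm_comp π⟩

theorem exists_isFreePair [Finite V] (c : V → Fin k) (hH : H.edgeSet.ncard < k * (k - 1) / 2) :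
    ∃ a b, a ≠ b ∧ IsFreePair H c a b := by
  have hpairs : {z : Sym2 (Fin k) | ¬z.IsDiag}.ncard = k * (k - 1) / 2 := by
    change Nat.card {z : Sym2 (Fin k) // ¬z.IsDiag} = _
    rw [Nat.card_eq_fintype_card, Sym2.card_subtype_not_diag, Fintype.card_fin,
      Nat.choose_two_right]
  have hlt : (Sym2.map c '' H.edgeSet).ncard < {z : Sym2 (Fin k) | ¬z.IsDiag}.ncard :=
    hpairs ▸ (Set.ncard_image_le (Set.toFinite _)).trans_lt hH
  obtain ⟨z, hz, hzH⟩ := Set.exists_mem_notMem_of_ncard_lt_ncard hlt (Set.toFinite _)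
  induction z using Sym2.ind with
  | _ a b =>
    refine ⟨a, b, fun h => hz (Sym2.mk_isDiag_iff.2 h), fun u v huv ⟨hu, hv⟩ => hzH ?_⟩
    exact ⟨s(u, v), huv, by rw [Sym2.map_mk, hu, hv]⟩

theorem Fin.exists_pair_ne_of_four_le (hk : 4 ≤ k) (a b : Fin k) :
    ∃ x y : Fin k, x ≠ y ∧ x ≠ a ∧ x ≠ b ∧ y ≠ a ∧ y ≠ b := by
  have hcard : 1 < (Finset.univ \ {a, b}).card := by
    rw [Finset.card_sdiff_of_subset (Finset.subset_univ _), Finset.card_univ, Fintype.card_fin]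
    have := Finset.card_le_two (a := a) (b := b)
    omega
  obtain ⟨x, hx, y, hy, hxy⟩ := Finset.one_lt_card.1 hcard
  simp only [Finset.mem_sdiff, Finset.mem_univ, Finset.mem_insert, Finset.mem_singleton,
    true_and, not_or] at hx hy
  exact ⟨x, y, hxy, hx.1, hx.2, hy.1, hy.2⟩

theorem isFreePair_of_isAnchoredOn (hmatch : ∀ u v w : V, H.Adj u v → H.Adj u w → v = w)
    (hS : IsAnchoredOn H S c a) (hT : IsAnchoredOn H Sᶜ c b) {x y : Fin k}
    (hxa : x ≠ a) (hxb : x ≠ b) (hya : y ≠ a) (hyb : y ≠ b) : IsFreePair H c x y := by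
  rintro u v huv ⟨hu, hv⟩
  by_cases huS : u ∈ S
  · obtain ⟨w, huw, hw⟩ := (hS u huS).resolve_left (hu ▸ hxa)
    exact hya (hv ▸ hmatch u v w huv huw ▸ hw)
  · obtain ⟨w, huw, hw⟩ := (hT u huS).resolve_left (hu ▸ hxb)
    exact hyb (hv ▸ hmatch u v w huv huw ▸ hw)

end BPlusM

section Reductions

variable {k : ℕ} {G H : SimpleGraph V} {S P : Set V} {c c' : V → Fin k} {a b x : Fin k}
  {v : V}

theorem exists_kempeEquiv_polarized [Finite V]
    (hcross : ∀ u v : V, G.Adj u v → ¬H.Adj u v → (u ∈ S ↔ v ∉ S))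
    (hc : IsProperColoring G k c) (hab : a ≠ b) (hfree : IsFreePair H c a b) :
    ∃ d, KempeEquiv G c d ∧ IsProperColoring G k d ∧ (∀ v, c v ≠ a → c v ≠ b → d v = c v) ∧
      (∀ v ∈ S, d v ≠ b) ∧ ∀ v ∉ S, d v ≠ a := by
  -- Along an `(a, b)`-edge the colour changes and, the edge not being in `H`, so does the part.
  have halt : ∀ ⦃u v⦄, (twoColorSub G c a b).Adj u v →
      ((c u = a ↔ u ∈ S) ↔ (c v = a ↔ v ∈ S)) := by
    rintro u v ⟨huv, hu, hv⟩
    have hne := hc huv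
    have hH : ¬H.Adj u v := fun h => by
      rcases hu with hu | hu <;> rcases hv with hv | hv
      exacts [hne (hu.trans hv.symm), hfree h ⟨hu, hv⟩, hfree h.symm ⟨hv, hu⟩,
        hne (hu.trans hv.symm)]
    have hS := hcross u v huv hH
    rcases hu with hu | hu <;> rcases hv with hv | hv <;> simp_all [Ne.symm hab]
  set X := {v | (c v = a ∨ c v = b) ∧ ¬(c v = a ↔ v ∈ S)}
  have hX : IsKempeClosed G c a b X := fun u v huv hu =>
    ⟨huv.2.2, fun h => hu.2 ((halt huv).2 h)⟩
  have hba := hab.symm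
  refine ⟨swapOn c a b X, kempeEquiv_swapOn hab hX, hc.swapOn hX, fun v => swapOn_of_ne,
    fun v hv => ?_, fun v hv => ?_⟩ <;>
  · by_cases hvX : v ∈ X
    · rw [swapOn_of_mem hvX, Equiv.swap_apply_def]
      simp only [X, Set.mem_ofPred_eq] at hvX
      split_ifs <;> simp_all
    · rw [swapOn_of_notMem hvX]
      simp only [X, Set.mem_ofPred_eq] at hvX
      intro h
      simp_all

theorem exists_kempeEquiv_isAnchoredOn [Finite V] (hP : IsPart G H P)
    (hc : IsProperColoring G k c) (x : Fin k)
    (hx : ∀ ⦃v w⦄, v ∈ P → w ∉ P → G.Adj v w → c w ≠ x) :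
    ∃ d, KempeEquiv G c d ∧ IsProperColoring G k d ∧ (∀ v ∉ P, d v = c v) ∧
      (∀ v ∈ P, d v = x ∨ d v = c v) ∧ IsAnchoredOn H P d x := by
  obtain ⟨d, hcd, hd, hout, hin, hmax⟩ := exists_kempeEquiv_recolor_maximal hc P x
  refine ⟨d, hcd, hd, hout, hin, fun v hv => or_iff_not_imp_left.2 fun hvx => ?_⟩
  obtain ⟨w, hvw, hw⟩ := hmax v hv hvx
  by_cases hwP : w ∈ P
  · exact ⟨w, (hP hv hvw).1 hwP, hw⟩
  · exact absurd (hout w hwP ▸ hw) (hx hv hwP hvw)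

theorem exists_kempeEquiv_isPairedOn [Finite V] (hHG : H ≤ G) (hP : IsPart G H P)
    (hmatch : ∀ u v w : V, H.Adj u v → H.Adj u w → v = w) (hc : IsProperColoring G k c)
    (ha : IsAnchoredOn H P c a) (hax : a ≠ x)
    (hx : ∀ ⦃v w⦄, v ∈ P → w ∉ P → G.Adj v w → c w ≠ x) :
    ∃ d, KempeEquiv G c d ∧ IsProperColoring G k d ∧ (∀ v ∉ P, d v = c v) ∧
      IsPairedOn H P d a x := by
  set Q := {v | v ∈ P ∧ c v ≠ a}
  have hpartner : ∀ ⦃v w⦄, v ∈ Q → w ∈ P → G.Adj v w → c w = a := by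
    intro v w hv hw hvw
    obtain ⟨u, hvu, hu⟩ := (ha v hv.1).resolve_left hv.2
    rwa [hmatch v w u ((hP hv.1 hvw).1 hw) hvu]
  have hQ : G.IsIndepSet Q := fun v hv w hw _ hvw => hw.2 (hpartner hv hw.1 hvw)
  obtain ⟨d, hcd, hd, hdQ, hd'⟩ := exists_kempeEquiv_recolor_indepSet hc hQ x fun v w hv hvw => by
    by_cases hw : w ∈ P
    · exact hpartner hv hw hvw ▸ hax
    · exact hx hv.1 hw hvw
  have hkeep : ∀ v, c v = a → d v = a := fun v hva => (hd' v fun h => h.2 hva).trans hva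
  refine ⟨d, hcd, hd, fun v hv => hd' v fun h => hv h.1,
    ha.mono hHG hP fun v _ => hkeep v, fun v hv => ?_⟩
  by_cases hva : c v = a
  · exact Or.inl (hkeep v hva)
  · exact Or.inr (hdQ v ⟨hv, hva⟩)

theorem IsPairedOn.exists_partner_of_ne (h : IsPairedOn H P c a x)
    (h' : IsPairedOn H P c' a x) (hHG : H ≤ G) (hP : IsPart G H P)
    (hc' : IsProperColoring G k c') (hv : v ∈ P) (hvx : c v = x) (hne : c v ≠ c' v) :
    ∃ u, H.Adj v u ∧ c u = c' v ∧ c' u = c v := by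
  have hv' : c' v = a := (h'.2 v hv).resolve_right fun h => hne (hvx.trans h.symm)
  obtain ⟨u, hvu, hu⟩ := (h.1 v hv).resolve_left fun hva => hne (hva.trans hv'.symm)
  have hu' : c' u ≠ a := fun hua => hc' (hHG hvu) (hv'.trans hua.symm)
  exact ⟨u, hvu, hu.trans hv'.symm,
    ((h'.2 u (hP.mem_of_adj hHG hv hvu)).resolve_left hu').trans hvx.symm⟩

/-- Two colourings paired on `P` with the same colours differ on `P` only by flipping the two
colours on some matching edges; flipping all of them is one swap on a union of Kempe chains. -/
theorem exists_kempeEquiv_eqOn_of_isPairedOn [Finite V] (hHG : H ≤ G) (hP : IsPart G H P)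
    (hmatch : ∀ u v w : V, H.Adj u v → H.Adj u w → v = w) (hax : a ≠ x)
    (hc : IsProperColoring G k c) (hc' : IsProperColoring G k c')
    (h : IsPairedOn H P c a x) (h' : IsPairedOn H P c' a x)
    (hout : ∀ ⦃v w⦄, v ∈ P → w ∉ P → G.Adj v w → c w ≠ a ∧ c w ≠ x) :
    ∃ d, KempeEquiv G c d ∧ IsProperColoring G k d ∧ (∀ v ∈ P, d v = c' v) ∧
      ∀ v ∉ P, d v = c v := by
  set X := {v | v ∈ P ∧ c v ≠ c' v}
  have hpartner : ∀ v ∈ X, ∃ u, H.Adj v u ∧ c u = c' v ∧ c' u = c v := by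
    rintro v ⟨hv, hne⟩
    rcases h.2 v hv with hva | hvx
    · have hv'x : c' v = x := (h'.2 v hv).resolve_left fun h => hne (hva.trans h.symm)
      obtain ⟨u, hvu, hu', hu⟩ := h'.exists_partner_of_ne h hHG hP hc hv hv'x (Ne.symm hne)
      exact ⟨u, hvu, hu, hu'⟩
    · exact h.exists_partner_of_ne h' hHG hP hc' hv hvx hne
  have hX : IsKempeClosed G c a x X := by
    rintro v w ⟨hvw, -, hw⟩ hv
    have hwP : w ∈ P := by
      by_contra hwP
      have := hout hv.1 hwP hvw
      tauto
    obtain ⟨u, hvu, hu, hu'⟩ := hpartner v hv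
    rw [hmatch v w u ((hP hv.1 hvw).1 hwP) hvu]
    exact ⟨hP.mem_of_adj hHG hv.1 hvu, by rw [hu, hu']; exact Ne.symm hv.2⟩
  refine ⟨swapOn c a x X, kempeEquiv_swapOn hax hX, hc.swapOn hX, fun v hv => ?_,
    fun v hv => swapOn_of_notMem fun h => hv h.1⟩
  by_cases hvX : v ∈ X
  · rw [swapOn_of_mem hvX]
    have hne := hvX.2
    rcases h.2 v hv with h₁ | h₁ <;> rcases h'.2 v hv with h₂ | h₂ <;> simp_all
  · rw [swapOn_of_notMem hvX]
    by_contra hne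
    exact hvX ⟨hv, hne⟩

end Reductions

section NormalForm

variable {k : ℕ} {G H : SimpleGraph V} {S : Set V} {c c' : V → Fin k}

theorem exists_kempeEquiv_isAnchoredOn_parts [Finite V] (hBE : IsBPlusE G S H)
    (hc : IsProperColoring G k c) (hH : H.edgeSet.ncard < k * (k - 1) / 2) :
    ∃ d α β, α ≠ β ∧ KempeEquiv G c d ∧ IsProperColoring G k d ∧
      IsAnchoredOn H S d α ∧ IsAnchoredOn H Sᶜ d β := by
  obtain ⟨α, β, hαβ, hfree⟩ := exists_isFreePair c hH
  obtain ⟨c₁, h₁, hc₁, -, hS₁, hT₁⟩ := exists_kempeEquiv_polarized hBE.2.1 hc hαβ hfree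
  obtain ⟨c₂, h₂, hc₂, hS₂, hT₂, hβ⟩ := exists_kempeEquiv_isAnchoredOn hBE.compl.isPart hc₁ β
    fun _ w _ hw _ => hS₁ w (Set.notMem_compl_iff.1 hw)
  obtain ⟨c₃, h₃, hc₃, hT₃, -, hα⟩ := exists_kempeEquiv_isAnchoredOn hBE.isPart hc₂ α
    fun _ w _ hw _ => by
      rcases hT₂ w hw with h | h <;> rw [h]
      exacts [hαβ.symm, hT₁ w hw]
  exact ⟨c₃, α, β, hαβ, h₁.trans (h₂.trans h₃), hc₃, hα,
    hβ.mono hBE.1 hBE.compl.isPart fun v hv h => (hT₃ v hv).trans h⟩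

theorem exists_kempeEquiv_isNormalForm [Finite V] (hBE : IsBPlusE G S H)
    (hmatch : ∀ u v w : V, H.Adj u v → H.Adj u w → v = w) (hk : 4 ≤ k)
    (hH : H.edgeSet.ncard < k * (k - 1) / 2) (hc : IsProperColoring G k c) :
    ∃ d r, KempeEquiv G c d ∧ IsProperColoring G k d ∧ IsNormalForm S H d r := by
  obtain ⟨c₃, α, β, hαβ, h₃, hc₃, hα₃, hβ₃⟩ := exists_kempeEquiv_isAnchoredOn_parts hBE hc hH
  obtain ⟨σ, τ, hστ, hσα, hσβ, hτα, hτβ⟩ := Fin.exists_pair_ne_of_four_le hk α β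
  obtain ⟨c₄, h₄, hc₄, hkeep, -, hT₄⟩ := exists_kempeEquiv_polarized hBE.2.1 hc₃ hστ
    (isFreePair_of_isAnchoredOn hmatch hα₃ hβ₃ hσα hσβ hτα hτβ)
  have hkeep' : ∀ z, z ≠ σ → z ≠ τ → ∀ v, c₃ v = z → c₄ v = z := fun z hzσ hzτ v h =>
    (hkeep v (h ▸ hzσ) (h ▸ hzτ)).trans h
  obtain ⟨c₅, h₅, hc₅, hT₅, hS₅⟩ := exists_kempeEquiv_isPairedOn hBE.1 hBE.isPart hmatch hc₄
    (hα₃.mono hBE.1 hBE.isPart fun v _ => hkeep' α hσα.symm hτα.symm v) hσα.symm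
    fun _ w _ hw _ => hT₄ w hw
  obtain ⟨c₆, h₆, hc₆, hS₆, hT₆⟩ := exists_kempeEquiv_isPairedOn hBE.1 hBE.compl.isPart hmatch
    hc₅ (hβ₃.mono hBE.1 hBE.compl.isPart fun v hv h =>
      (hT₅ v hv).trans (hkeep' β hσβ.symm hτβ.symm v h)) hτβ.symm
    fun _ w _ hw _ => by
      rcases hS₅.2 w (Set.notMem_compl_iff.1 hw) with h | h <;> rw [h]
      exacts [hτα.symm, hστ]
  let r : Fin 4 ↪ Fin k := ⟨![α, σ, β, τ], by
    intro i j hij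
    fin_cases i <;> fin_cases j <;> simp_all [eq_comm]⟩
  exact ⟨c₆, r, h₃.trans (h₄.trans (h₅.trans h₆)), hc₆,
    hS₅.congr hBE.1 hBE.isPart fun v hv => hS₆ v (Set.notMem_compl_iff.2 hv), hT₆⟩

theorem IsNormalForm.kempeEquiv [Finite V] {r : Fin 4 ↪ Fin k} (hBE : IsBPlusE G S H)
    (hmatch : ∀ u v w : V, H.Adj u v → H.Adj u w → v = w)
    (hc : IsProperColoring G k c) (hc' : IsProperColoring G k c')
    (h : IsNormalForm S H c r) (h' : IsNormalForm S H c' r) : KempeEquiv G c c' := by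
  have hr : ∀ i j, i ≠ j → r i ≠ r j := fun _ _ => r.injective.ne
  obtain ⟨d, hcd, hd, hdS, hdT⟩ := exists_kempeEquiv_eqOn_of_isPairedOn hBE.1 hBE.isPart hmatch
    (hr 0 1 (by decide)) hc hc' h.1 h'.1 fun _ w _ hw _ => by
      rcases h.2.2 w hw with h | h <;> rw [h]
      exacts [⟨hr 2 0 (by decide), hr 2 1 (by decide)⟩, ⟨hr 3 0 (by decide), hr 3 1 (by decide)⟩]
  obtain ⟨e, hde, -, heT, heS⟩ := exists_kempeEquiv_eqOn_of_isPairedOn hBE.1 hBE.compl.isPart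
    hmatch (hr 2 3 (by decide)) hd hc' (h.2.congr hBE.1 hBE.compl.isPart hdT) h'.2
    fun _ w _ hw _ => by
      have hwS := Set.notMem_compl_iff.1 hw
      rcases h'.1.2 w hwS with h | h <;> rw [hdS w hwS, h]
      exacts [⟨hr 0 2 (by decide), hr 0 3 (by decide)⟩, ⟨hr 1 2 (by decide), hr 1 3 (by decide)⟩]
  have hec : e = c' := funext fun v => by
    by_cases hv : v ∈ S
    · exact (heS v (Set.notMem_compl_iff.2 hv)).trans (hdS v hv)
    · exact heT v hv
  exact hcd.trans (hec ▸ hde)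

end NormalForm

/-- For a `B + M_ℓ` graph (the added edges form a matching inside the
parts) with `k ≥ 4` and `ℓ < k(k-1)/2`, every two proper `k`-colorings are Kempe
equivalent. -/
theorem kempe_equiv_of_BplusM {V : Type*} [Fintype V]
    (G : SimpleGraph V) (S : Set V) (H : SimpleGraph V) (hBE : IsBPlusE G S H)
    (hmatch : ∀ u v w : V, H.Adj u v → H.Adj u w → v = w)
    (ℓ k : ℕ) (hcard : H.edgeSet.ncard = ℓ) (hk : 4 ≤ k) (hℓ : ℓ < k * (k - 1) / 2)
    (c c' : V → Fin k) (hc : IsProperColoring G k c) (hc' : IsProperColoring G k c') :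
    KempeEquiv G c c' := by
  have hH : H.edgeSet.ncard < k * (k - 1) / 2 := hcard ▸ hℓ
  obtain ⟨d, r, hcd, hd, hdr⟩ := exists_kempeEquiv_isNormalForm hBE hmatch hk hH hc
  obtain ⟨d', r', hcd', hd', hdr'⟩ := exists_kempeEquiv_isNormalForm hBE hmatch hk hH hc'
  obtain ⟨π, hπ⟩ := Equiv.Perm.exists_extending_pair r r' r.injective r'.injective
  have hr : r.trans π.toEmbedding = r' := Function.Embedding.ext hπ
  have hπd : IsNormalForm S H (π ∘ d) r' := hr ▸ hdr.perm_comp π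
  have hπd' : IsProperColoring G k (π ∘ d) := fun _ _ huv => π.injective.ne (hd huv)
  exact hcd.trans ((kempeEquiv_perm_comp π).trans
    ((hπd.kempeEquiv hBE hmatch hπd' hd' hdr').trans hcd'.symm))
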